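/- Let ε ∈ (0, 3/4), λ > 0, L' > 0, and let f : ℝ^{d×r} → ℝ be continuously differentiable such that for every x ∈ St(d,r)^ε with x' = Proj_St(x): ‖∇𝓛(x) − ∇𝓛(x')‖_F ≤ L'‖x − x'‖_F and ‖Λ(x) − Λ(x')‖_F ≤ L'‖x − x'‖_F. Then for every x ∈ St(d,r)^ε: ‖∇𝓛(x)‖_F ≤ C‖Λ(x)‖_F, where C = 3L'/(λ(1−ε)) + 2. -/

import Mathlib

open Matrix BigOperators Finset

noncomputable section

namespace DRFGT

/-- Frobenius inner product `⟨A, B⟩ = Tr (A Bᵀ)`. -/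
def finner {m k : Type*} [Fintype m] [Fintype k] (A B : Matrix m k ℝ) : ℝ :=
  Matrix.trace (A * Bᵀ)

/-- Frobenius norm `‖A‖_F = √⟨A, A⟩`. -/
def fnorm {m k : Type*} [Fintype m] [Fintype k] (A : Matrix m k ℝ) : ℝ :=
  Real.sqrt (finner A A)

/-- Skew part of a square matrix, `skew(A) = (A − Aᵀ)/2`. -/
def mskew {m : Type*} [Fintype m] (A : Matrix m m ℝ) : Matrix m m ℝ :=
  (2 : ℝ)⁻¹ • (A - Aᵀ)

/-- Symmetric part of a square matrix, `sym(A) = (A + Aᵀ)/2`. -/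
def msym {m : Type*} [Fintype m] (A : Matrix m m ℝ) : Matrix m m ℝ :=
  (2 : ℝ)⁻¹ • (A + Aᵀ)

/-- Relative (Riemannian) gradient `grad f(x) = skew(∇f(x) xᵀ) x`, where `Df` denotes the
Euclidean gradient `∇f` of `f`. -/
def rgrad {d r : ℕ} (Df : Matrix (Fin d) (Fin r) ℝ → Matrix (Fin d) (Fin r) ℝ)
    (x : Matrix (Fin d) (Fin r) ℝ) : Matrix (Fin d) (Fin r) ℝ :=
  mskew (Df x * xᵀ) * x

/-- Landing field `Λ(x) = grad f(x) + λ x (xᵀ x − I_r)`. -/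
def landing {d r : ℕ} (Df : Matrix (Fin d) (Fin r) ℝ → Matrix (Fin d) (Fin r) ℝ) (lam : ℝ)
    (x : Matrix (Fin d) (Fin r) ℝ) : Matrix (Fin d) (Fin r) ℝ :=
  rgrad Df x + lam • (x * (xᵀ * x - 1))

/-- The Stiefel manifold `St(d,r) = {x : xᵀ x = I_r}`. -/
def St (d r : ℕ) : Set (Matrix (Fin d) (Fin r) ℝ) := {x | xᵀ * x = 1}

/-- The safety region `St(d,r)^ε = {x : ‖xᵀ x − I_r‖_F ≤ ε}`. -/
def StEps (d r : ℕ) (ε : ℝ) : Set (Matrix (Fin d) (Fin r) ℝ) :=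
  {x | fnorm (xᵀ * x - 1) ≤ ε}

/-- The merit function `𝓛(x) = f(x) − ½⟨sym(xᵀ∇f(x)), xᵀx − I_r⟩ + γ·¼‖xᵀx − I_r‖_F²`. -/
def merit {d r : ℕ} (f : Matrix (Fin d) (Fin r) ℝ → ℝ)
    (Df : Matrix (Fin d) (Fin r) ℝ → Matrix (Fin d) (Fin r) ℝ) (γ : ℝ)
    (x : Matrix (Fin d) (Fin r) ℝ) : ℝ :=
  f x - (2 : ℝ)⁻¹ * finner (msym (xᵀ * Df x)) (xᵀ * x - 1)
    + γ * (4 : ℝ)⁻¹ * fnorm (xᵀ * x - 1) ^ 2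

/-- The gradient of the merit function at on-manifold points:
`∇𝓛(x) = ∇f(x) − x · sym(xᵀ∇f(x))` for `x ∈ St(d,r)`. -/
def meritGradSt {d r : ℕ} (Df : Matrix (Fin d) (Fin r) ℝ → Matrix (Fin d) (Fin r) ℝ)
    (x : Matrix (Fin d) (Fin r) ℝ) : Matrix (Fin d) (Fin r) ℝ :=
  Df x - x * msym (xᵀ * Df x)

/-- `x'` is the polar factor of a full-column-rank `x`, i.e. the projection `Proj_St(x)` of `x`
onto the Stiefel manifold: if `x = U S Vᵀ` is a thin SVD then `x' = U Vᵀ`, equivalently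
`x'ᵀ x' = I_r` and `x = x' P` for a positive definite `P` (namely `P = V S Vᵀ`). -/
def IsPolarFactor {d r : ℕ} (x x' : Matrix (Fin d) (Fin r) ℝ) : Prop :=
  x'ᵀ * x' = 1 ∧ ∃ P : Matrix (Fin r) (Fin r) ℝ, P.PosDef ∧ x = x' * P

/-- Frobenius distance from `x` to a set `S`: `dist(S,x) = inf_{y ∈ S} ‖x − y‖_F`. -/
def fdist {d r : ℕ} (S : Set (Matrix (Fin d) (Fin r) ℝ)) (x : Matrix (Fin d) (Fin r) ℝ) : ℝ :=
  sInf ((fun y => fnorm (x - y)) '' S)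

/-- Network average `z̄ = (1/n) Σᵢ zᵢ`. -/
def avg {n d r : ℕ} (z : Fin n → Matrix (Fin d) (Fin r) ℝ) : Matrix (Fin d) (Fin r) ℝ :=
  (n : ℝ)⁻¹ • ∑ i, z i

/-- Frobenius norm of a stacked family: `‖𝐳‖_F = (Σᵢ ‖zᵢ‖_F²)^{1/2}`. -/
def snorm {n d r : ℕ} (z : Fin n → Matrix (Fin d) (Fin r) ℝ) : ℝ :=
  Real.sqrt (∑ i, fnorm (z i) ^ 2)


/-!
Write `x = x' P` with `x'` the polar factor of `x` and `P = (xᵀx)^{1/2}`, and let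
`δ = ‖x - x'‖`. Since `x - x' = x' (P - 1)`, `xᵀx - 1 = (P + 1)(P - 1)` and `P + 1 ≥ 1`, we get
`δ ≤ ‖xᵀx - 1‖`. The two summands of `Λ(x)` are orthogonal (a skew-symmetric matrix is orthogonal
to a symmetric one) and `xᵀx ≥ 1 - ε`, so `‖Λ(x)‖ ≥ λ(1 - ε)‖xᵀx - 1‖ ≥ λ(1 - ε)δ`.
On the manifold, `∇𝓛(x')` and `Λ(x') = grad f(x')` have the same component `x' skew(x'ᵀ∇f(x'))`
along `x'`, while the orthogonal component of `∇𝓛(x')` is twice that of `grad f(x')`; hence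
`‖∇𝓛(x')‖ ≤ 2‖Λ(x')‖`. The two Lipschitz bounds then give
`‖∇𝓛(x)‖ ≤ L'δ + 2(L'δ + ‖Λ(x)‖)`, and `3L'δ ≤ 3L'/(λ(1 - ε)) ‖Λ(x)‖`.
-/

attribute [local instance] Matrix.frobeniusNormedAddCommGroup Matrix.frobeniusNormedSpace

section Frobenius

variable {m n k : Type*} [Fintype m] [Fintype n] [Fintype k]

theorem finner_eq_sum (A B : Matrix m n ℝ) : finner A B = ∑ i, ∑ j, A i j * B i j := by
  simp [finner, trace, mul_apply]

theorem fnorm_eq_norm (A : Matrix m n ℝ) : fnorm A = ‖A‖ := by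
  rw [fnorm, finner_eq_sum, frobenius_norm_def, Real.sqrt_eq_rpow]
  simp [← sq]

theorem sq_norm_eq_finner (A : Matrix m n ℝ) : ‖A‖ ^ 2 = finner A A := by
  rw [← fnorm_eq_norm, fnorm, Real.sq_sqrt, finner_eq_sum]
  exact sum_nonneg fun _ _ => sum_nonneg fun _ _ => mul_self_nonneg _

theorem sq_norm_eq_trace (A : Matrix m n ℝ) : ‖A‖ ^ 2 = trace (Aᵀ * A) := by
  rw [sq_norm_eq_finner, finner, trace_mul_comm]

theorem abs_finner_le (A B : Matrix m n ℝ) : |finner A B| ≤ ‖A‖ * ‖B‖ := by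
  -- The Frobenius norm is by definition the `L²` norm of the family of rows.
  let rows (M : Matrix m n ℝ) : PiLp 2 fun _ : m => EuclideanSpace ℝ n :=
    WithLp.toLp 2 fun i => WithLp.toLp 2 (M i)
  have h : finner A B = inner ℝ (rows A) (rows B) := by
    simp [rows, finner_eq_sum, PiLp.inner_apply, mul_comm]
  rw [h]
  exact abs_real_inner_le_norm (rows A) (rows B)

theorem norm_add_sq_of_finner_eq_zero {A B : Matrix m n ℝ} (h : finner A B = 0) :
    ‖A + B‖ ^ 2 = ‖A‖ ^ 2 + ‖B‖ ^ 2 := by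
  have hBA : finner B A = 0 := by
    rwa [finner, ← trace_transpose, transpose_mul, transpose_transpose]
  simp only [sq_norm_eq_finner, finner, transpose_add, Matrix.add_mul, Matrix.mul_add,
    trace_add] at h hBA ⊢
  linarith

theorem norm_le_norm_add_of_finner_eq_zero {A B : Matrix m n ℝ} (h : finner A B = 0) :
    ‖B‖ ≤ ‖A + B‖ := by
  rw [← pow_le_pow_iff_left₀ (norm_nonneg _) (norm_nonneg _) two_ne_zero,
    norm_add_sq_of_finner_eq_zero h]
  nlinarith [sq_nonneg ‖A‖]

theorem sq_norm_mul (x : Matrix m n ℝ) (A : Matrix n k ℝ) :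
    ‖x * A‖ ^ 2 = trace (Aᵀ * (xᵀ * x) * A) := by
  rw [sq_norm_eq_trace, transpose_mul]
  simp only [Matrix.mul_assoc]

theorem abs_dotProduct_mulVec_le (N : Matrix m m ℝ) (v : m → ℝ) :
    |v ⬝ᵥ N *ᵥ v| ≤ ‖N‖ * (v ⬝ᵥ v) := by
  have hv : 0 ≤ v ⬝ᵥ v := by simpa using dotProduct_self_star_nonneg v
  have h_finner : v ⬝ᵥ N *ᵥ v = finner N (vecMulVec v v) := by
    simp only [finner_eq_sum, dotProduct, mulVec, vecMulVec_apply, Finset.mul_sum]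
    exact sum_congr rfl fun _ _ => sum_congr rfl fun _ _ => by ring
  have h_norm : ‖vecMulVec v v‖ = v ⬝ᵥ v := by
    rw [← pow_left_inj₀ (norm_nonneg _) hv two_ne_zero, sq_norm_eq_finner, finner_eq_sum, sq,
      dotProduct, Finset.sum_mul_sum]
    exact sum_congr rfl fun _ _ => sum_congr rfl fun _ _ => by rw [vecMulVec_apply]; ring
  rw [h_finner, ← h_norm]
  exact abs_finner_le _ _

variable [DecidableEq n]

theorem norm_mul_of_transpose_mul_self_eq_one {x : Matrix m n ℝ} (hx : xᵀ * x = 1)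
    (A : Matrix n k ℝ) : ‖x * A‖ = ‖A‖ := by
  rw [← pow_left_inj₀ (norm_nonneg _) (norm_nonneg _) two_ne_zero, sq_norm_mul, hx,
    Matrix.mul_one, sq_norm_eq_trace]

theorem mul_sq_norm_le_sq_norm_mul {x : Matrix m n ℝ} {c : ℝ}
    (hx : (xᵀ * x - c • 1).PosSemidef) (A : Matrix n k ℝ) : c * ‖A‖ ^ 2 ≤ ‖x * A‖ ^ 2 := by
  have h := (hx.conjTranspose_mul_mul_same A).trace_nonneg
  rw [conjTranspose_eq_transpose_of_trivial, Matrix.mul_sub, Matrix.sub_mul, trace_sub,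
    Matrix.mul_smul, Matrix.smul_mul, Matrix.mul_one, trace_smul, sub_nonneg] at h
  rwa [sq_norm_mul, sq_norm_eq_trace]

end Frobenius

section Gram

variable {n : Type*} [Fintype n] [DecidableEq n]

theorem posSemidef_sub_smul_one_of_norm_sub_one_le {M : Matrix n n ℝ} (hM : Mᵀ = M) {ε : ℝ}
    (h : ‖M - 1‖ ≤ ε) : (M - (1 - ε) • 1).PosSemidef := by
  rw [posSemidef_iff_dotProduct_mulVec]
  refine ⟨?_, fun v => ?_⟩
  · simp [IsHermitian, conjTranspose_eq_transpose_of_trivial, hM]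
  have hv : 0 ≤ v ⬝ᵥ v := by simpa using dotProduct_self_star_nonneg v
  have h_split : star v ⬝ᵥ (M - (1 - ε) • 1) *ᵥ v = v ⬝ᵥ (M - 1) *ᵥ v + ε * (v ⬝ᵥ v) := by
    simp only [star_trivial, sub_mulVec, smul_mulVec, one_mulVec, dotProduct_sub,
      dotProduct_smul, smul_eq_mul]
    ring
  rw [h_split]
  nlinarith [neg_abs_le (v ⬝ᵥ (M - 1) *ᵥ v), abs_dotProduct_mulVec_le (M - 1) v,
    mul_le_mul_of_nonneg_right h hv]

theorem posDef_of_norm_sub_one_le {M : Matrix n n ℝ} (hM : Mᵀ = M) {ε : ℝ} (hε : ε < 1)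
    (h : ‖M - 1‖ ≤ ε) : M.PosDef := by
  simpa using (PosDef.one.smul (sub_pos.2 hε)).add_posSemidef
    (posSemidef_sub_smul_one_of_norm_sub_one_le hM h)

open scoped MatrixOrder in
theorem exists_posDef_mul_self_eq {M : Matrix n n ℝ} (hM : M.PosDef) :
    ∃ P : Matrix n n ℝ, P.PosDef ∧ P * P = M :=
  ⟨CFC.sqrt M, (CFC.sqrt_nonneg M).posSemidef.posDef_iff_isUnit.2
      (CFC.isUnit_sqrt_iff_isStrictlyPositive.2 hM.isStrictlyPositive),
    CFC.sqrt_mul_sqrt_self M hM.posSemidef.nonneg⟩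

theorem norm_sub_one_le_norm_mul_self_sub_one {P : Matrix n n ℝ} (hP : P.PosSemidef) :
    ‖P - 1‖ ≤ ‖P * P - 1‖ := by
  have hPt : Pᵀ = P := by simpa [conjTranspose_eq_transpose_of_trivial] using hP.isHermitian.eq
  have h_gram : ((P + 1)ᵀ * (P + 1) - (1 : ℝ) • 1).PosSemidef := by
    have h : (P + 1)ᵀ * (P + 1) - (1 : ℝ) • 1 = Pᴴ * P + (P + P) := by
      rw [conjTranspose_eq_transpose_of_trivial, transpose_add, transpose_one, hPt, one_smul]
      noncomm_ring
    rw [h]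
    exact (posSemidef_conjTranspose_mul_self P).add (hP.add hP)
  have h := mul_sq_norm_le_sq_norm_mul h_gram (P - 1)
  rw [one_mul, show (P + 1) * (P - 1) = P * P - 1 by noncomm_ring] at h
  exact (pow_le_pow_iff_left₀ (norm_nonneg _) (norm_nonneg _) two_ne_zero).1 h

end Gram

theorem exists_isPolarFactor_norm_sub_le {d r : ℕ} {x : Matrix (Fin d) (Fin r) ℝ}
    (hx : (xᵀ * x).PosDef) : ∃ x', IsPolarFactor x x' ∧ ‖x - x'‖ ≤ ‖xᵀ * x - 1‖ := by
  obtain ⟨P, hP, hPP⟩ := exists_posDef_mul_self_eq hx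
  have hPt : Pᵀ = P := by simpa [conjTranspose_eq_transpose_of_trivial] using hP.isHermitian.eq
  have hdet : IsUnit P.det := (isUnit_iff_isUnit_det P).1 hP.isUnit
  set x' := x * P⁻¹ with hx'
  have hx'P : x' * P = x := by rw [hx', Matrix.mul_assoc, nonsing_inv_mul P hdet, Matrix.mul_one]
  have horth : x'ᵀ * x' = 1 := by
    rw [hx', transpose_mul, transpose_nonsing_inv, hPt, Matrix.mul_assoc, ← Matrix.mul_assoc xᵀ,
      ← hPP, ← Matrix.mul_assoc, ← Matrix.mul_assoc, nonsing_inv_mul P hdet, Matrix.one_mul,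
      mul_nonsing_inv P hdet]
  refine ⟨x', ⟨horth, P, hP, hx'P.symm⟩, ?_⟩
  calc ‖x - x'‖ = ‖x' * (P - 1)‖ := by rw [Matrix.mul_sub, Matrix.mul_one, hx'P]
    _ = ‖P - 1‖ := norm_mul_of_transpose_mul_self_eq_one horth _
    _ ≤ ‖P * P - 1‖ := norm_sub_one_le_norm_mul_self_sub_one hP.posSemidef
    _ = ‖xᵀ * x - 1‖ := by rw [hPP]

section Orthogonality

variable {m n k : Type*} [Fintype m] [Fintype n] [Fintype k]

theorem trace_mul_eq_zero_of_transpose_eq_neg {A K : Matrix m m ℝ} (hA : Aᵀ = -A) (hK : Kᵀ = K) :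
    trace (A * K) = 0 := by
  have h : trace (A * K) = -trace (A * K) := by
    conv_lhs => rw [← trace_transpose, transpose_mul, hA, hK, Matrix.mul_neg, trace_neg,
      trace_mul_comm]
  linarith

theorem finner_mskew_mul_mul_eq_zero (S : Matrix m m ℝ) (x : Matrix m n ℝ) {N : Matrix n n ℝ}
    (hN : Nᵀ = N) : finner (mskew S * x) (x * N) = 0 := by
  have hS : (mskew S)ᵀ = -mskew S := by
    rw [mskew, transpose_smul, transpose_sub, transpose_transpose, ← smul_neg, neg_sub]
  have hK : (x * N * xᵀ)ᵀ = x * N * xᵀ := by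
    rw [transpose_mul, transpose_mul, transpose_transpose, hN, Matrix.mul_assoc]
  rw [finner, transpose_mul, hN, Matrix.mul_assoc, ← Matrix.mul_assoc x]
  exact trace_mul_eq_zero_of_transpose_eq_neg hS hK

theorem sq_norm_mul_add_of_transpose_mul_eq_zero [DecidableEq n] {x : Matrix m n ℝ}
    (hx : xᵀ * x = 1) {B : Matrix m k ℝ} (hB : xᵀ * B = 0) (K : Matrix n k ℝ) :
    ‖x * K + B‖ ^ 2 = ‖K‖ ^ 2 + ‖B‖ ^ 2 := by
  have h : finner (x * K) B = 0 := by
    rw [finner, Matrix.mul_assoc, trace_mul_comm, Matrix.mul_assoc, ← transpose_transpose x,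
      ← transpose_mul, hB, transpose_zero, Matrix.mul_zero, trace_zero]
  rw [norm_add_sq_of_finner_eq_zero h, norm_mul_of_transpose_mul_self_eq_one hx]

theorem sub_mskew_eq_msym (A : Matrix m m ℝ) : A - mskew A = msym A := by
  ext i j
  simp only [mskew, msym, Matrix.sub_apply, Matrix.smul_apply, Matrix.add_apply,
    Matrix.transpose_apply, smul_eq_mul]
  ring

theorem norm_sub_mul_msym_le_two_mul_norm_mskew_mul [DecidableEq n] {x : Matrix m n ℝ}
    (hx : xᵀ * x = 1) (G : Matrix m n ℝ) :
    ‖G - x * msym (xᵀ * G)‖ ≤ 2 * ‖mskew (G * xᵀ) * x‖ := by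
  set A := xᵀ * G
  have hB : xᵀ * (G - x * A) = 0 := by
    rw [Matrix.mul_sub, ← Matrix.mul_assoc, hx, Matrix.one_mul, sub_self]
  have h_merit : G - x * msym A = x * mskew A + (G - x * A) := by
    rw [← sub_mskew_eq_msym, Matrix.mul_sub]
    abel
  have h_rgrad : mskew (G * xᵀ) * x = x * mskew A + (2 : ℝ)⁻¹ • (G - x * A) := by
    have hGx : Gᵀ * x = Aᵀ := by rw [transpose_mul, transpose_transpose]
    rw [mskew, mskew, Matrix.smul_mul, Matrix.sub_mul, transpose_mul, transpose_transpose,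
      Matrix.mul_assoc, hx, Matrix.mul_one, Matrix.mul_assoc, hGx, Matrix.mul_smul, Matrix.mul_sub,
      ← smul_add]
    abel_nf
  rw [← pow_le_pow_iff_left₀ (norm_nonneg _) (by positivity) two_ne_zero, mul_pow, h_merit,
    h_rgrad, sq_norm_mul_add_of_transpose_mul_eq_zero hx hB,
    sq_norm_mul_add_of_transpose_mul_eq_zero hx (by rw [Matrix.mul_smul, hB, smul_zero]),
    norm_smul]
  norm_num
  nlinarith [sq_nonneg ‖mskew A‖, sq_nonneg ‖G - x * A‖]

end Orthogonality

theorem abs_mul_norm_le_norm_landing {d r : ℕ}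
    (Df : Matrix (Fin d) (Fin r) ℝ → Matrix (Fin d) (Fin r) ℝ) (lam : ℝ)
    (x : Matrix (Fin d) (Fin r) ℝ) :
    |lam| * ‖x * (xᵀ * x - 1)‖ ≤ ‖landing Df lam x‖ := by
  have hN : (lam • (xᵀ * x - 1))ᵀ = lam • (xᵀ * x - 1) := by
    rw [transpose_smul, transpose_sub, transpose_mul, transpose_transpose, transpose_one]
  rw [← Real.norm_eq_abs, ← norm_smul, landing, ← Matrix.mul_smul]
  exact norm_le_norm_add_of_finner_eq_zero (finner_mskew_mul_mul_eq_zero _ x hN)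

theorem mul_norm_gram_sub_one_le_norm_landing {d r : ℕ}
    (Df : Matrix (Fin d) (Fin r) ℝ → Matrix (Fin d) (Fin r) ℝ) {lam ε : ℝ} (hlam : 0 ≤ lam)
    (hε : ε ≤ 1) {x : Matrix (Fin d) (Fin r) ℝ} (hx : ‖xᵀ * x - 1‖ ≤ ε) :
    lam * (1 - ε) * ‖xᵀ * x - 1‖ ≤ ‖landing Df lam x‖ := by
  set N := xᵀ * x - 1
  have hε0 : 0 ≤ ε := (norm_nonneg N).trans hx
  have h_gram := mul_sq_norm_le_sq_norm_mul
    (posSemidef_sub_smul_one_of_norm_sub_one_le (by simp) hx) N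
  have h : (1 - ε) * ‖N‖ ≤ ‖x * N‖ := by
    rw [← pow_le_pow_iff_left₀ (by positivity) (norm_nonneg _) two_ne_zero]
    nlinarith [sq_nonneg ‖N‖]
  calc lam * (1 - ε) * ‖N‖ = lam * ((1 - ε) * ‖N‖) := by ring
    _ ≤ |lam| * ‖x * N‖ := by rw [abs_of_nonneg hlam]; gcongr
    _ ≤ ‖landing Df lam x‖ := abs_mul_norm_le_norm_landing Df lam x

theorem landing_of_mem_St {d r : ℕ} (Df : Matrix (Fin d) (Fin r) ℝ → Matrix (Fin d) (Fin r) ℝ)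
    (lam : ℝ) {x : Matrix (Fin d) (Fin r) ℝ} (hx : x ∈ St d r) : landing Df lam x = rgrad Df x := by
  rw [landing, show xᵀ * x = 1 from hx, sub_self, Matrix.mul_zero, smul_zero, add_zero]

theorem meritGrad_le_C_landing_general {d r : ℕ} (ε lam L' : ℝ)
    (hε : ε ∈ Set.Ioo (0 : ℝ) (3 / 4)) (hlam : 0 < lam) (hL' : 0 < L')
    (Df : Matrix (Fin d) (Fin r) ℝ → Matrix (Fin d) (Fin r) ℝ)
    (DL : Matrix (Fin d) (Fin r) ℝ → Matrix (Fin d) (Fin r) ℝ)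
    (hDLSt : ∀ x' ∈ St d r, DL x' = meritGradSt Df x')
    (hDLlip : ∀ x x' : Matrix (Fin d) (Fin r) ℝ, x ∈ StEps d r ε → IsPolarFactor x x' →
      fnorm (DL x - DL x') ≤ L' * fnorm (x - x'))
    (hLamLip : ∀ x x' : Matrix (Fin d) (Fin r) ℝ, x ∈ StEps d r ε → IsPolarFactor x x' →
      fnorm (landing Df lam x - landing Df lam x') ≤ L' * fnorm (x - x')) :
    ∀ x ∈ StEps d r ε,
      fnorm (DL x) ≤ (3 * L' / (lam * (1 - ε)) + 2) * fnorm (landing Df lam x) := by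
  intro x hx
  have hε1 : 0 < 1 - ε := by linarith [hε.2]
  have hgram : ‖xᵀ * x - 1‖ ≤ ε := (fnorm_eq_norm _).symm.trans_le hx
  obtain ⟨x', hpolar, hdist⟩ :=
    exists_isPolarFactor_norm_sub_le (posDef_of_norm_sub_one_le (by simp) (by linarith) hgram)
  have hDL := hDLlip x x' hx hpolar
  have hLam := hLamLip x x' hx hpolar
  simp only [fnorm_eq_norm] at hDL hLam ⊢
  have h_onSt : ‖DL x'‖ ≤ 2 * ‖landing Df lam x'‖ := by
    rw [hDLSt x' hpolar.1, landing_of_mem_St Df lam hpolar.1]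
    exact norm_sub_mul_msym_le_two_mul_norm_mskew_mul hpolar.1 (Df x')
  have h_normal : lam * (1 - ε) * ‖x - x'‖ ≤ ‖landing Df lam x‖ :=
    (mul_le_mul_of_nonneg_left hdist (by positivity)).trans
      (mul_norm_gram_sub_one_le_norm_landing Df hlam.le (by linarith) hgram)
  have h_dist : 3 * L' * ‖x - x'‖ ≤ 3 * L' / (lam * (1 - ε)) * ‖landing Df lam x‖ := by
    rw [div_mul_eq_mul_div, le_div_iff₀ (by positivity)]
    nlinarith
  calc ‖DL x‖ ≤ ‖DL x - DL x'‖ + ‖DL x'‖ := norm_le_norm_sub_add _ _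
    _ ≤ L' * ‖x - x'‖ + 2 * (‖landing Df lam x‖ + ‖landing Df lam x - landing Df lam x'‖) := by
      linarith [norm_le_norm_add_norm_sub (landing Df lam x) (landing Df lam x')]
    _ ≤ _ := by linarith

/-- Let `ε ∈ (0, 3/4)`, `λ > 0`, `L' > 0`, and let `f` be continuously
differentiable with Euclidean gradient `Df` and merit-function gradient `DL = ∇𝓛` (so that
`DL x' = ∇f(x') − x'·sym(x'ᵀ∇f(x'))` at on-manifold points). Assume that for every
`x ∈ St(d,r)^ε` with `x' = Proj_St(x)` one has `‖∇𝓛(x) − ∇𝓛(x')‖_F ≤ L'‖x − x'‖_F` and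
`‖Λ(x) − Λ(x')‖_F ≤ L'‖x − x'‖_F`. Then for every `x ∈ St(d,r)^ε`,
`‖∇𝓛(x)‖_F ≤ C‖Λ(x)‖_F` with `C = 3L'/(λ(1−ε)) + 2`. -/
theorem meritGrad_le_C_landing {d r : ℕ} (ε lam L' γ : ℝ)
    (hε : ε ∈ Set.Ioo (0 : ℝ) (3 / 4)) (hlam : 0 < lam) (hL' : 0 < L')
    (f : Matrix (Fin d) (Fin r) ℝ → ℝ)
    (Df : Matrix (Fin d) (Fin r) ℝ → Matrix (Fin d) (Fin r) ℝ)
    (DL : Matrix (Fin d) (Fin r) ℝ → Matrix (Fin d) (Fin r) ℝ)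
    (hDLSt : ∀ x' ∈ St d r, DL x' = meritGradSt Df x')
    (hDLlip : ∀ x x' : Matrix (Fin d) (Fin r) ℝ, x ∈ StEps d r ε → IsPolarFactor x x' →
      fnorm (DL x - DL x') ≤ L' * fnorm (x - x'))
    (hLamLip : ∀ x x' : Matrix (Fin d) (Fin r) ℝ, x ∈ StEps d r ε → IsPolarFactor x x' →
      fnorm (landing Df lam x - landing Df lam x') ≤ L' * fnorm (x - x')) :
    ∀ x ∈ StEps d r ε,
      fnorm (DL x) ≤ (3 * L' / (lam * (1 - ε)) + 2) * fnorm (landing Df lam x) :=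
  meritGrad_le_C_landing_general ε lam L' hε hlam hL' Df DL hDLSt hDLlip hLamLip

end DRFGT
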